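/- Let A ≥ 1, d = A + 2, and write elements of ℤ^d as ν = (m, n₁, n₂) with m ∈ ℤ^A and n₁, n₂ ∈ ℤ. Let ω ∈ ℝ^d satisfy ω·ν ≠ 0 for all ν ∈ ℤ^d∖{0}. Let Q, R : ℤ^d → ℂ be such that R_ν ≠ 0 only if n₂ = 2, and Q_ν ≠ 0 only if m = 0 and n₂ = −2. Suppose u : ℕ × ℤ^d → ℂ satisfies: u^{(k)}_0 = 0 for all k; u^{(0)}_ν = R_ν/(i ω·ν) for ν ≠ 0; and for k ≥ 1 and ν ≠ 0, u^{(k)}_ν = (i ω·ν)^{−1} ∑_{k₁+k₂=k−1} ∑_{ν₀+ν₁+ν₂=ν} Q_{ν₀} u^{(k₁)}_{ν₁} u^{(k₂)}_{ν₂}, where each of these sums converges absolutely. Then for every k ≥ 0 and every ν = (m, n₁, n₂) ∈ ℤ^d∖{0} with u^{(k)}_ν ≠ 0, one has n₂ = 2. -/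

import Mathlib

/-!
Grade each mode by its last component `n₂`. The source `R` has grade `2`, and the cubic term
`Q u u` has grade `-2 + 2 + 2 = 2` as soon as both factors `u` do, because the grade of a
convolution term is the sum of the grades of its factors. Induction on `k` therefore keeps every
`u^{(k)}` supported in grade `2`; the mode `0` needs no care since `u^{(k)}_0 = 0`.
-/

theorem exists_ne_zero_of_tsum_ne_zero {α M : Type*} [AddCommMonoid M] [TopologicalSpace M]
    {f : α → M} (h : ∑' a, f a ≠ 0) : ∃ a, f a ≠ 0 := by
  by_contra! hf
  exact h (by simp [hf])

theorem AddMonoidHom.map_eq_add_of_tsum_ne_zero {G R : Type*} [AddCommGroup G]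
    [CommRing R] [TopologicalSpace R] [NoZeroDivisors R] (φ : G →+ ℤ) {q a b : G → R}
    {cq ca cb : ℤ} (hq : ∀ x, q x ≠ 0 → φ x = cq) (ha : ∀ x, a x ≠ 0 → φ x = ca)
    (hb : ∀ x, b x ≠ 0 → φ x = cb) {ν : G}
    (h : ∑' p : G × G, q p.1 * a p.2 * b (ν - p.1 - p.2) ≠ 0) :
    φ ν = cq + ca + cb := by
  obtain ⟨p, hp⟩ := exists_ne_zero_of_tsum_ne_zero h
  have hqa := left_ne_zero_of_mul hp
  have hφ := hb _ (right_ne_zero_of_mul hp)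
  rw [map_sub, map_sub, hq _ (left_ne_zero_of_mul hqa), ha _ (right_ne_zero_of_mul hqa)] at hφ
  omega

theorem last_component_eq_two_general
    (A : ℕ) (ω₁ : Fin A → ℝ) (ω₀ Ω₀ : ℝ)
    (Q R : (Fin A → ℤ) × ℤ × ℤ → ℂ)
    (hR : ∀ ν : (Fin A → ℤ) × ℤ × ℤ, R ν ≠ 0 → ν.2.2 = 2)
    (hQ : ∀ ν : (Fin A → ℤ) × ℤ × ℤ, Q ν ≠ 0 → ν.1 = 0 ∧ ν.2.2 = -2)
    
    (u : ℕ → (Fin A → ℤ) × ℤ × ℤ → ℂ)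
    (hu0 : ∀ k : ℕ, u k 0 = 0)
    (hu00 : ∀ ν : (Fin A → ℤ) × ℤ × ℤ, ν ≠ 0 →
      u 0 ν = R ν / (Complex.I *
        (((∑ i, ω₁ i * (ν.1 i : ℝ)) + ω₀ * (ν.2.1 : ℝ) + Ω₀ * (ν.2.2 : ℝ) : ℝ) : ℂ)))
    (huk : ∀ k : ℕ, 1 ≤ k → ∀ ν : (Fin A → ℤ) × ℤ × ℤ, ν ≠ 0 →
      u k ν = (Complex.I *
          (((∑ i, ω₁ i * (ν.1 i : ℝ)) + ω₀ * (ν.2.1 : ℝ) + Ω₀ * (ν.2.2 : ℝ) : ℝ) : ℂ))⁻¹ *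
        ∑ k₁ ∈ Finset.range k,
          ∑' p : ((Fin A → ℤ) × ℤ × ℤ) × ((Fin A → ℤ) × ℤ × ℤ),
            Q p.1 * u k₁ p.2 * u (k - 1 - k₁) (ν - p.1 - p.2)) :
    ∀ (k : ℕ) (ν : (Fin A → ℤ) × ℤ × ℤ), ν ≠ 0 → u k ν ≠ 0 →
      ν.2.2 = 2 := by
  let grade : (Fin A → ℤ) × ℤ × ℤ →+ ℤ := (AddMonoidHom.snd ℤ ℤ).comp (AddMonoidHom.snd _ _)
  suffices ∀ k ν, u k ν ≠ 0 → grade ν = 2 from fun k ν _ => this k ν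
  intro k
  induction k using Nat.strong_induction_on with
  | _ k ih =>
    intro ν hu
    have hν : ν ≠ 0 := by
      rintro rfl
      exact hu (hu0 k)
    rcases k with _ | k
    · rw [hu00 ν hν] at hu
      exact hR ν (div_ne_zero_iff.mp hu).1
    · rw [huk _ k.succ_pos ν hν] at hu
      obtain ⟨k₁, hk₁, hterm⟩ := Finset.exists_ne_zero_of_sum_ne_zero (right_ne_zero_of_mul hu)
      rw [Finset.mem_range] at hk₁
      exact grade.map_eq_add_of_tsum_ne_zero (fun x hx => (hQ x hx).2)
        (ih k₁ hk₁) (ih (k - k₁) (by omega)) hterm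

/-- Writing modes as `ν = (m, n₁, n₂) ∈ ℤ^A × ℤ × ℤ`, with `R` supported on
`n₂ = 2`, `Q` supported on `m = 0, n₂ = −2`, and vanishing zero modes
`u^{(k)}_0 = 0`, the coefficients `u^{(k)}_ν` (for `ν ≠ 0`) can be nonzero
only if `n₂ = 2`. -/
theorem last_component_eq_two
    (A : ℕ) (hA : 1 ≤ A) (ω₁ : Fin A → ℝ) (ω₀ Ω₀ : ℝ)
    (hω : ∀ ν : (Fin A → ℤ) × ℤ × ℤ, ν ≠ 0 →
      (∑ i, ω₁ i * (ν.1 i : ℝ)) + ω₀ * (ν.2.1 : ℝ) + Ω₀ * (ν.2.2 : ℝ) ≠ 0)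
    (Q R : (Fin A → ℤ) × ℤ × ℤ → ℂ)
    (hR : ∀ ν : (Fin A → ℤ) × ℤ × ℤ, R ν ≠ 0 → ν.2.2 = 2)
    (hQ : ∀ ν : (Fin A → ℤ) × ℤ × ℤ, Q ν ≠ 0 → ν.1 = 0 ∧ ν.2.2 = -2)
    
    (u : ℕ → (Fin A → ℤ) × ℤ × ℤ → ℂ)
    (hu0 : ∀ k : ℕ, u k 0 = 0)
    (hu00 : ∀ ν : (Fin A → ℤ) × ℤ × ℤ, ν ≠ 0 →
      u 0 ν = R ν / (Complex.I *
        (((∑ i, ω₁ i * (ν.1 i : ℝ)) + ω₀ * (ν.2.1 : ℝ) + Ω₀ * (ν.2.2 : ℝ) : ℝ) : ℂ)))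
    (hsum : ∀ k : ℕ, 1 ≤ k → ∀ ν : (Fin A → ℤ) × ℤ × ℤ, ν ≠ 0 → ∀ k₁ ∈ Finset.range k,
      Summable (fun p : ((Fin A → ℤ) × ℤ × ℤ) × ((Fin A → ℤ) × ℤ × ℤ) =>
        ‖Q p.1 * u k₁ p.2 * u (k - 1 - k₁) (ν - p.1 - p.2)‖))
    (huk : ∀ k : ℕ, 1 ≤ k → ∀ ν : (Fin A → ℤ) × ℤ × ℤ, ν ≠ 0 →
      u k ν = (Complex.I *
          (((∑ i, ω₁ i * (ν.1 i : ℝ)) + ω₀ * (ν.2.1 : ℝ) + Ω₀ * (ν.2.2 : ℝ) : ℝ) : ℂ))⁻¹ *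
        ∑ k₁ ∈ Finset.range k,
          ∑' p : ((Fin A → ℤ) × ℤ × ℤ) × ((Fin A → ℤ) × ℤ × ℤ),
            Q p.1 * u k₁ p.2 * u (k - 1 - k₁) (ν - p.1 - p.2)) :
    ∀ (k : ℕ) (ν : (Fin A → ℤ) × ℤ × ℤ), ν ≠ 0 → u k ν ≠ 0 →
      ν.2.2 = 2 :=
  last_component_eq_two_general A ω₁ ω₀ Ω₀ Q R hR hQ u hu0 hu00 huk
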